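/- arXiv:1701.02191 — 4 statements merged into one kernel-verified Lean document; each statement's English description precedes it below -/
import Mathlib

section
/- Let L ∈ (0,1) and let a : (0,π) → [0,1] be a measurable function with ∫₀^π a(x) dx = Lπ. Then for every positive integer j, ∫₀^π a(x) sin²(jx) dx ≥ (Lπ − sin(Lπ))/2. -/
/-!
Since `sin² (j x) = (1 - cos (2 j x)) / 2`, it suffices to show `∫ a cos (2 j x) ≤ sin θ` for
`θ = L π`. With `c = cos θ` and `0 ≤ a ≤ 1`, pointwise `a (cos (2 j x) - c) ≤ (cos (2 j x) - c)⁺`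
(the bathtub principle). By periodicity, the integral of `(cos (2 j x) - c)⁺` over `(0, π)` is
half its integral over `[-π, π]`, where it is supported on `[-θ, θ]`; this gives
`sin θ - θ c`, and adding back `c ∫ a = θ c` yields the bound.
-/

open MeasureTheory Real Set intervalIntegral

theorem Function.Periodic.intervalIntegral_comp_nat_mul {E : Type*} [NormedAddCommGroup E]
    [NormedSpace ℝ E] {f : ℝ → E} {T : ℝ} (hf : f.Periodic T)
    (h_int : ∀ t₁ t₂, IntervalIntegrable f volume t₁ t₂) {n : ℕ} (hn : n ≠ 0) :
    ∫ x in 0..T, f (n * x) = ∫ x in 0..T, f x := by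
  have hn' : (n : ℝ) ≠ 0 := Nat.cast_ne_zero.2 hn
  have h_nT := hf.intervalIntegral_add_zsmul_eq n 0 h_int
  rw [zero_add, zero_add, natCast_zsmul] at h_nT
  rw [integral_comp_mul_left f hn', mul_zero, ← nsmul_eq_mul, h_nT,
    ← Int.cast_smul_eq_zsmul ℝ, Int.cast_natCast, inv_smul_smul₀ hn']

theorem mul_le_max_zero {a g : ℝ} (ha : a ∈ Icc (0 : ℝ) 1) : a * g ≤ max g 0 := by
  rcases le_or_gt 0 g with hg | hg
  · exact (mul_le_of_le_one_left hg ha.2).trans (le_max_left _ _)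
  · exact (mul_nonpos_of_nonneg_of_nonpos ha.1 hg.le).trans (le_max_right _ _)

theorem setIntegral_mul_le_setIntegral_max_zero {α : Type*} [MeasurableSpace α] {μ : Measure α}
    {s : Set α} (hs : MeasurableSet s) {a g : α → ℝ} (ha : ∀ x ∈ s, a x ∈ Icc (0 : ℝ) 1)
    (hag : IntegrableOn (fun x ↦ a x * g x) s μ) (hg : IntegrableOn (fun x ↦ max (g x) 0) s μ) :
    ∫ x in s, a x * g x ∂μ ≤ ∫ x in s, max (g x) 0 ∂μ :=
  setIntegral_mono_on hag hg hs fun x hx ↦ mul_le_max_zero (ha x hx)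

theorem integrableOn_of_mem_Icc_zero_one {α : Type*} [MeasurableSpace α] {μ : Measure α}
    {s : Set α} (hs : MeasurableSet s) (hμs : μ s ≠ ⊤) {a : α → ℝ} (ha : Measurable a)
    (hab : ∀ x ∈ s, a x ∈ Icc (0 : ℝ) 1) : IntegrableOn a s μ :=
  Measure.integrableOn_of_bounded hμs ha.aestronglyMeasurable
    ((ae_restrict_iff' hs).2 <| ae_of_all _ fun x hx ↦ by
      rw [Real.norm_eq_abs, abs_of_nonneg (hab x hx).1]
      exact (hab x hx).2)

theorem MeasureTheory.IntegrableOn.mul_cos_const_mul {s : Set ℝ} {μ : Measure ℝ} {a : ℝ → ℝ}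
    (ha : IntegrableOn a s μ) (c : ℝ) : IntegrableOn (fun x ↦ a x * cos (c * x)) s μ :=
  ha.mul_bdd (by fun_prop : Continuous fun x ↦ cos (c * x)).aestronglyMeasurable
    (ae_of_all _ fun x ↦ by simpa using abs_cos_le_one (c * x))

theorem max_cos_sub_cos_eq_of_abs_le {θ u : ℝ} (hθ : θ ≤ π) (hu : |u| ≤ θ) :
    max (cos u - cos θ) 0 = cos u - cos θ := by
  have : cos θ ≤ cos u := cos_abs u ▸ cos_le_cos_of_nonneg_of_le_pi (abs_nonneg u) hθ hu
  rw [max_eq_left (sub_nonneg.2 this)]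

theorem max_cos_sub_cos_eq_zero_of_le_abs {θ u : ℝ} (hθ : 0 ≤ θ) (hu : θ ≤ |u|) (hu' : |u| ≤ π) :
    max (cos u - cos θ) 0 = 0 := by
  have : cos u ≤ cos θ := cos_abs u ▸ cos_le_cos_of_nonneg_of_le_pi hθ hu' hu
  rw [max_eq_right (sub_nonpos.2 this)]

theorem integral_max_cos_sub_cos_neg_pi_pi {θ : ℝ} (hθ : θ ∈ Icc 0 π) :
    ∫ u in -π..π, max (cos u - cos θ) 0 = 2 * (sin θ - θ * cos θ) := by
  obtain ⟨hθ0, hθπ⟩ := hθ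
  have hint : ∀ s t : ℝ, IntervalIntegrable (fun u ↦ max (cos u - cos θ) 0) volume s t :=
    fun s t ↦ ((continuous_cos.sub continuous_const).max continuous_const).intervalIntegrable s t
  have left : ∫ u in -π..-θ, max (cos u - cos θ) 0 = 0 := by
    refine (integral_congr fun u hu ↦ ?_).trans integral_zero
    rw [uIcc_of_le (by linarith)] at hu
    have hu_neg : |u| = -u := abs_of_nonpos (by linarith [hu.2])
    exact max_cos_sub_cos_eq_zero_of_le_abs hθ0 (by linarith [hu.2]) (by linarith [hu.1])
  have right : ∫ u in θ..π, max (cos u - cos θ) 0 = 0 := by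
    refine (integral_congr fun u hu ↦ ?_).trans integral_zero
    rw [uIcc_of_le hθπ] at hu
    have hu_pos : |u| = u := abs_of_nonneg (by linarith [hu.1])
    exact max_cos_sub_cos_eq_zero_of_le_abs hθ0 (by linarith [hu.1]) (by linarith [hu.2])
  have middle : ∫ u in -θ..θ, max (cos u - cos θ) 0 = 2 * (sin θ - θ * cos θ) := by
    rw [integral_congr fun u hu ↦ max_cos_sub_cos_eq_of_abs_le hθπ ?_]
    · simp [intervalIntegral.integral_sub, integral_cos]
      ring
    · rw [uIcc_of_le (by linarith)] at hu
      exact abs_le.2 hu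
  rw [← integral_add_adjacent_intervals (hint (-π) (-θ)) (hint (-θ) π),
    ← integral_add_adjacent_intervals (hint (-θ) θ) (hint θ π), left, right, middle]
  ring

theorem integral_max_cos_two_nat_mul_sub_cos {θ : ℝ} (hθ : θ ∈ Icc 0 π) {j : ℕ} (hj : j ≠ 0) :
    ∫ x in 0..π, max (cos (2 * j * x) - cos θ) 0 = sin θ - θ * cos θ := by
  set g : ℝ → ℝ := fun u ↦ max (cos u - cos θ) 0
  have hg : g.Periodic (2 * π) := fun u ↦ by simp only [g, cos_add_two_pi]
  have hg_int : ∀ s t, IntervalIntegrable g volume s t :=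
    fun s t ↦ ((continuous_cos.sub continuous_const).max continuous_const).intervalIntegrable s t
  have hshift := hg.intervalIntegral_add_eq 0 (-π)
  rw [zero_add, show -π + 2 * π = π by ring] at hshift
  calc ∫ x in 0..π, g (2 * j * x)
      = ∫ x in 0..π, g (j * (2 * x)) := by simp only [mul_assoc, mul_left_comm (j : ℝ)]
    _ = 2⁻¹ * ∫ y in 0..2 * π, g (j * y) := by
      rw [integral_comp_mul_left (fun y ↦ g (j * y)) two_ne_zero, mul_zero, smul_eq_mul]
    _ = 2⁻¹ * ∫ u in -π..π, g u := by rw [hg.intervalIntegral_comp_nat_mul hg_int hj, hshift]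
    _ = sin θ - θ * cos θ := by
      rw [integral_max_cos_sub_cos_neg_pi_pi hθ]
      ring

theorem setIntegral_mul_cos_le_sin {a : ℝ → ℝ} (ha : Measurable a)
    (hab : ∀ x ∈ Ioo 0 π, a x ∈ Icc (0 : ℝ) 1) {θ : ℝ} (hθ : θ ∈ Icc 0 π)
    (hint : ∫ x in Ioo 0 π, a x = θ) {j : ℕ} (hj : j ≠ 0) :
    ∫ x in Ioo 0 π, a x * cos (2 * j * x) ≤ sin θ := by
  have hIa : IntegrableOn a (Ioo 0 π) :=
    integrableOn_of_mem_Icc_zero_one measurableSet_Ioo measure_Ioo_lt_top.ne ha hab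
  have hIacos := hIa.mul_cos_const_mul (2 * j)
  have hIsub : IntegrableOn (fun x ↦ a x * (cos (2 * j * x) - cos θ)) (Ioo 0 π) := by
    simp_rw [mul_sub]
    exact hIacos.sub (hIa.mul_const _)
  have hImax : IntegrableOn (fun x ↦ max (cos (2 * j * x) - cos θ) 0) (Ioo 0 π) :=
    (by fun_prop : Continuous fun x ↦ max (cos (2 * j * x) - cos θ) 0).integrableOn_Icc.mono_set
      Ioo_subset_Icc_self
  calc ∫ x in Ioo 0 π, a x * cos (2 * j * x)
      = (∫ x in Ioo 0 π, a x * (cos (2 * j * x) - cos θ)) + θ * cos θ := by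
        simp only [mul_sub]
        rw [integral_sub hIacos (hIa.mul_const _), MeasureTheory.integral_mul_const, hint]
        ring
    _ ≤ (∫ x in Ioo 0 π, max (cos (2 * j * x) - cos θ) 0) + θ * cos θ :=
        add_le_add_left
          (setIntegral_mul_le_setIntegral_max_zero measurableSet_Ioo hab hIsub hImax) _
    _ = sin θ := by
        rw [← integral_Ioc_eq_integral_Ioo, ← integral_of_le pi_pos.le,
          integral_max_cos_two_nat_mul_sub_cos hθ hj]
        ring

theorem stmt0 (L : ℝ) (hL : L ∈ Set.Ioo (0:ℝ) 1)
    (a : ℝ → ℝ) (ha : Measurable a)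
    (hab : ∀ x ∈ Set.Ioo (0:ℝ) π, a x ∈ Set.Icc (0:ℝ) 1)
    (hint : ∫ x in Set.Ioo (0:ℝ) π, a x = L * π)
    (j : ℕ) (hj : 1 ≤ j) :
    (L * π - Real.sin (L * π)) / 2
      ≤ ∫ x in Set.Ioo (0:ℝ) π, a x * Real.sin (j * x) ^ 2 := by
  have hLπ : L * π ∈ Icc 0 π :=
    ⟨mul_nonneg hL.1.le pi_pos.le, mul_le_of_le_one_left pi_pos.le hL.2.le⟩
  have hcos_le := setIntegral_mul_cos_le_sin ha hab hLπ hint (Nat.one_le_iff_ne_zero.1 hj)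
  have hIa : IntegrableOn a (Ioo 0 π) :=
    integrableOn_of_mem_Icc_zero_one measurableSet_Ioo measure_Ioo_lt_top.ne ha hab
  have hsin_sq (x : ℝ) : a x * sin (j * x) ^ 2 = a x / 2 - a x * cos (2 * j * x) / 2 := by
    rw [sin_sq_eq_half_sub, mul_assoc]
    ring
  simp only [hsin_sq]
  rw [integral_sub (hIa.div_const 2) ((hIa.mul_cos_const_mul (2 * j)).div_const 2),
    MeasureTheory.integral_div, MeasureTheory.integral_div, hint]
  linarith
end

section
/- Let (γ_j)_{j∈ℕ*} be a sequence of positive real numbers with Σ_j 1/γ_j < ∞. Then sup over all sequences (g_j) with Σ_j |g_j|² = 1 of inf_j γ_j |g_j|² equals (Σ_j 1/γ_j)^{-1}, and the supremum is attained exactly when |g_j|² = (Σ_k 1/γ_k)^{-1} / γ_j for every j. -/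
theorem stmt5 (γ : ℕ → ℝ) (hγ : ∀ j, 0 < γ j)
    (hsum : Summable fun j => 1 / γ j) :
    (∀ g : ℕ → ℂ, Summable (fun j => ‖g j‖ ^ 2) → ∑' j, ‖g j‖ ^ 2 = 1 →
        ⨅ j, γ j * ‖g j‖ ^ 2 ≤ (∑' j, 1 / γ j)⁻¹) ∧
    (∀ g : ℕ → ℂ, Summable (fun j => ‖g j‖ ^ 2) → ∑' j, ‖g j‖ ^ 2 = 1 →
        ((⨅ j, γ j * ‖g j‖ ^ 2 = (∑' j, 1 / γ j)⁻¹) ↔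
          ∀ j, ‖g j‖ ^ 2 = (∑' k, 1 / γ k)⁻¹ * (1 / γ j))) ∧
    (∃ g : ℕ → ℂ, Summable (fun j => ‖g j‖ ^ 2) ∧ ∑' j, ‖g j‖ ^ 2 = 1 ∧
        ⨅ j, γ j * ‖g j‖ ^ 2 = (∑' j, 1 / γ j)⁻¹) := by
  set S := ∑' j, 1 / γ j with hSdef
  have hS : 0 < S := Summable.tsum_pos hsum (fun j => le_of_lt (div_pos one_pos (hγ j))) 0 (div_pos one_pos (hγ 0))
  have hbd : ∀ g : ℕ → ℂ, BddBelow (Set.range fun j => γ j * ‖g j‖ ^ 2) := by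
    intro g
    exact ⟨0, by rintro x ⟨j, rfl⟩; exact mul_nonneg (hγ j).le (by positivity)⟩
  -- Part 1
  have part1 : ∀ g : ℕ → ℂ, Summable (fun j => ‖g j‖ ^ 2) → ∑' j, ‖g j‖ ^ 2 = 1 →
      ⨅ j, γ j * ‖g j‖ ^ 2 ≤ S⁻¹ := by
    intro g hsg hts
    set c := ⨅ j, γ j * ‖g j‖ ^ 2 with hc
    have hle : ∀ j, c * (1 / γ j) ≤ ‖g j‖ ^ 2 := by
      intro j
      have h1 : c ≤ γ j * ‖g j‖ ^ 2 := ciInf_le (hbd g) j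
      rw [mul_one_div, div_le_iff₀ (hγ j)]
      linarith [h1, mul_comm (γ j) (‖g j‖ ^ 2)]
    have hsum2 : Summable fun j => c * (1 / γ j) := hsum.mul_left c
    have h2 : c * S ≤ 1 := by
      calc c * S = ∑' j, c * (1 / γ j) := (tsum_mul_left).symm
        _ ≤ ∑' j, ‖g j‖ ^ 2 := Summable.tsum_le_tsum hle hsum2 hsg
        _ = 1 := hts
    have := (le_div_iff₀ hS).mpr h2
    rwa [one_div] at this
  -- backward direction of part 2
  have back : ∀ g : ℕ → ℂ, (∀ j, ‖g j‖ ^ 2 = S⁻¹ * (1 / γ j)) →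
      ⨅ j, γ j * ‖g j‖ ^ 2 = S⁻¹ := by
    intro g hg
    have : ∀ j, γ j * ‖g j‖ ^ 2 = S⁻¹ := by
      intro j
      rw [hg j]
      field_simp
      exact div_self (hγ j).ne'
    simp only [this]
    exact ciInf_const
  refine ⟨part1, ?_, ?_⟩
  · intro g hsg hts
    constructor
    · intro heq j
      have hle : ∀ j, S⁻¹ * (1 / γ j) ≤ ‖g j‖ ^ 2 := by
        intro j
        have h1 : S⁻¹ ≤ γ j * ‖g j‖ ^ 2 := heq ▸ ciInf_le (hbd g) j
        rw [mul_one_div, div_le_iff₀ (hγ j)]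
        linarith [mul_comm (γ j) (‖g j‖ ^ 2)]
      set h := fun j => ‖g j‖ ^ 2 - S⁻¹ * (1 / γ j) with hh
      have hsumh : Summable h := hsg.sub (hsum.mul_left S⁻¹)
      have htsh : ∑' j, h j = 0 := by
        rw [hh]
        rw [Summable.tsum_sub hsg (hsum.mul_left S⁻¹), hts, tsum_mul_left, ← hSdef,
          inv_mul_cancel₀ hS.ne', sub_self]
      have hnn : ∀ j, 0 ≤ h j := fun j => sub_nonneg.mpr (hle j)
      have := Summable.le_tsum hsumh j (fun i _ => hnn i)
      rw [htsh] at this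
      exact sub_eq_zero.mp (le_antisymm this (hnn j))
    · intro hg
      exact back g hg
  · refine ⟨fun j => (Real.sqrt (S⁻¹ * (1 / γ j)) : ℂ), ?_⟩
    have hval : ∀ j, ‖((Real.sqrt (S⁻¹ * (1 / γ j)) : ℝ) : ℂ)‖ ^ 2 = S⁻¹ * (1 / γ j) := by
      intro j
      rw [Complex.norm_real, Real.norm_eq_abs, sq_abs, Real.sq_sqrt (le_of_lt (mul_pos (inv_pos.mpr hS) (div_pos one_pos (hγ j))))]
    refine ⟨?_, ?_, back _ hval⟩
    · simpa only [hval] using hsum.mul_left S⁻¹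
    · simp only [hval]
      rw [tsum_mul_left, ← hSdef, inv_mul_cancel₀ hS.ne']
end

section
/- Let (γ_j) be a sequence of positive reals with Σ 1/γ_j < ∞, and let S be the set of nonnegative summable sequences summing to 1. Define F(α,β) = Σ_j γ_j α_j β_j for α,β ∈ S. Then sup_{α∈S} inf_{β∈S} F(α,β) = (Σ_j 1/γ_j)^{-1}, and the pair (λ*,λ*) with λ*_j = (Σ_k 1/γ_k)^{-1}/γ_j is a saddle point. -/
/-! The weights `λ*ⱼ = c⁻¹ / γⱼ`, with `c = ∑ₖ 1 / γₖ`, equalize both players: `γⱼ λ*ⱼ = c⁻¹`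
for every `j`, so `F(λ*, β) = F(α, λ*) = c⁻¹ ∑ⱼ βⱼ = c⁻¹` for all `α, β` in the simplex. A point
at which each player's payoff does not depend on the opponent's strategy is a saddle point, and
its common value is the sup-inf value. -/

open Set

def summableSimplex (ι : Type*) : Set (ι → ℝ) :=
  {β | (∀ j, 0 ≤ β j) ∧ Summable β ∧ ∑' j, β j = 1}

theorem ciSup_ciInf_eq_of_forall_eq {α β L : Type*} [ConditionallyCompleteLattice L]
    {F : α → β → L} {v : L} (x₀ : α) (y₀ : β) (hx₀ : ∀ y, F x₀ y = v)
    (hy₀ : ∀ x, F x y₀ = v) (hbdd : ∀ x, BddBelow (range (F x))) :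
    ⨆ x, ⨅ y, F x y = v := by
  have : Nonempty α := ⟨x₀⟩
  have : Nonempty β := ⟨y₀⟩
  have hle : ∀ x, ⨅ y, F x y ≤ v := fun x => (ciInf_le (hbdd x) y₀).trans_eq (hy₀ x)
  refine le_antisymm (ciSup_le hle) ?_
  calc v = ⨅ y, F x₀ y := by simp only [hx₀, ciInf_const]
    _ ≤ ⨆ x, ⨅ y, F x y := le_ciSup ⟨v, forall_mem_range.2 hle⟩ x₀

section Weights

variable {ι : Type*} {γ l : ι → ℝ} {c : ℝ}

theorem tsum_mul_mul_eq_of_mul_eq (h : ∀ j, γ j * l j = c) (β : ι → ℝ) :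
    ∑' j, γ j * l j * β j = c * ∑' j, β j := by
  simp only [h, tsum_mul_left]

theorem tsum_mul_mul_eq_of_mul_eq_right (h : ∀ j, γ j * l j = c) (α : ι → ℝ) :
    ∑' j, γ j * α j * l j = c * ∑' j, α j := by
  rw [← tsum_mul_mul_eq_of_mul_eq h]
  congr with j
  ring

theorem tsum_mul_mul_nonneg {α β : ι → ℝ} (hγ : ∀ j, 0 ≤ γ j)
    (hα : α ∈ summableSimplex ι) (hβ : β ∈ summableSimplex ι) :
    0 ≤ ∑' j, γ j * α j * β j :=
  tsum_nonneg fun j => mul_nonneg (mul_nonneg (hγ j) (hα.1 j)) (hβ.1 j)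

theorem mem_summableSimplex_of_eq_inv_tsum_mul [Nonempty ι] (hγ : ∀ j, 0 < γ j)
    (hsum : Summable fun j => 1 / γ j) (hl : ∀ j, l j = (∑' k, 1 / γ k)⁻¹ * (1 / γ j)) :
    l ∈ summableSimplex ι := by
  have hc : 0 < ∑' k, 1 / γ k :=
    hsum.tsum_pos (fun j => (one_div_pos.2 (hγ j)).le) (Classical.arbitrary ι)
      (one_div_pos.2 (hγ _))
  obtain rfl : l = _ := funext hl
  refine ⟨fun j => ?_, hsum.mul_left _, ?_⟩
  · have := hγ j
    positivity
  · rw [tsum_mul_left, inv_mul_cancel₀ hc.ne']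

end Weights

theorem stmt6 (γ : ℕ → ℝ) (hγ : ∀ j, 0 < γ j)
    (hsum : Summable fun j => 1 / γ j)
    (S : Set (ℕ → ℝ))
    (hS : S = {β : ℕ → ℝ | (∀ j, 0 ≤ β j) ∧ Summable β ∧ ∑' j, β j = 1})
    (F : (ℕ → ℝ) → (ℕ → ℝ) → ℝ)
    (hF : ∀ α β, F α β = ∑' j, γ j * α j * β j)
    (l : ℕ → ℝ) (hl : ∀ j, l j = (∑' k, 1 / γ k)⁻¹ * (1 / γ j)) :
    (⨆ α : S, ⨅ β : S, F α β) = (∑' j, 1 / γ j)⁻¹ ∧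
    l ∈ S ∧
    (∀ α ∈ S, F α l ≤ F l l) ∧
    (∀ β ∈ S, F l l ≤ F l β) := by
  obtain rfl : S = summableSimplex ℕ := hS
  have hl_mem := mem_summableSimplex_of_eq_inv_tsum_mul hγ hsum hl
  have hγl : ∀ j, γ j * l j = (∑' k, 1 / γ k)⁻¹ := fun j => by
    rw [hl]
    field_simp [(hγ j).ne']
  have hrow : ∀ β ∈ summableSimplex ℕ, F l β = (∑' k, 1 / γ k)⁻¹ := fun β hβ => by
    rw [hF, tsum_mul_mul_eq_of_mul_eq hγl, hβ.2.2, mul_one]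
  have hcol : ∀ α ∈ summableSimplex ℕ, F α l = (∑' k, 1 / γ k)⁻¹ := fun α hα => by
    rw [hF, tsum_mul_mul_eq_of_mul_eq_right hγl, hα.2.2, mul_one]
  refine ⟨?_, hl_mem, fun α hα => ((hcol α hα).trans (hrow l hl_mem).symm).le,
    fun β hβ => ((hrow l hl_mem).trans (hrow β hβ).symm).le⟩
  refine ciSup_ciInf_eq_of_forall_eq ⟨l, hl_mem⟩ ⟨l, hl_mem⟩ (fun β => hrow β β.2)
    (fun α => hcol α α.2) fun α => ⟨0, forall_mem_range.2 fun β => ?_⟩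
  exact (hF α β).symm ▸ tsum_mul_mul_nonneg (fun j => (hγ j).le) α.2 β.2
end

section
/- Let Ω have finite measure and let f₁,…,f_N ∈ L¹(Ω) be nonnegative. Then sup_{a∈Ū_L} min_{1≤j≤N} ∫ a f_j dx = min_{α∈S_N} sup_{a∈Ū_L} ∫ a (Σ_j α_j f_j) dx, where S_N is the simplex {α ∈ [0,1]^N : Σ α_j = 1}. -/
open MeasureTheory

theorem stmt10 {X : Type*} [MeasurableSpace X] (μ : Measure X) [IsFiniteMeasure μ]
    (L : ℝ) (hL : L ∈ Set.Ioo (0:ℝ) 1)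
    (N : ℕ) (hN : 0 < N) (f : Fin N → X → ℝ)
    (hf : ∀ j, Integrable (f j) μ) (hfpos : ∀ j x, 0 ≤ f j x)
    (UL : Set (X → ℝ))
    (hUL : UL = {a : X → ℝ | Measurable a ∧ (∀ x, a x ∈ Set.Icc (0:ℝ) 1) ∧
        ∫ x, a x ∂μ = L * (μ Set.univ).toReal})
    (SN : Set (Fin N → ℝ))
    (hSN : SN = {α : Fin N → ℝ | (∀ j, α j ∈ Set.Icc (0:ℝ) 1) ∧ ∑ j, α j = 1}) :
    (⨆ a : UL, ⨅ j : Fin N, ∫ x, (a : X → ℝ) x * f j x ∂μ)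
      = ⨅ α : SN, ⨆ a : UL, ∫ x, (a : X → ℝ) x * (∑ j, (α : Fin N → ℝ) j * f j x) ∂μ := by
  subst hUL hSN
  obtain ⟨hL0, hL1⟩ := hL
  haveI : Nonempty (Fin N) := Fin.pos_iff_nonempty.mp hN
  -- UL is nonempty
  have ha0 : (fun _ : X => L) ∈ {a : X → ℝ | Measurable a ∧ (∀ x, a x ∈ Set.Icc (0:ℝ) 1) ∧
      ∫ x, a x ∂μ = L * (μ Set.univ).toReal} := by
    refine ⟨measurable_const, fun x => ⟨hL0.le, hL1.le⟩, ?_⟩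
    simp [integral_const, smul_eq_mul, mul_comm, measureReal_def]
  haveI : Nonempty {a : X → ℝ | Measurable a ∧ (∀ x, a x ∈ Set.Icc (0:ℝ) 1) ∧
      ∫ x, a x ∂μ = L * (μ Set.univ).toReal} := ⟨⟨_, ha0⟩⟩
  -- basic facts about members of UL
  have hmem : ∀ a ∈ {a : X → ℝ | Measurable a ∧ (∀ x, a x ∈ Set.Icc (0:ℝ) 1) ∧ ∫ x, a x ∂μ = L * (μ Set.univ).toReal}, Measurable a ∧ ∀ x, 0 ≤ a x ∧ a x ≤ 1 := by
    intro a ha; exact ⟨ha.1, fun x => ha.2.1 x⟩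
  have hInt : ∀ a ∈ {a : X → ℝ | Measurable a ∧ (∀ x, a x ∈ Set.Icc (0:ℝ) 1) ∧ ∫ x, a x ∂μ = L * (μ Set.univ).toReal}, ∀ j, Integrable (fun x => a x * f j x) μ := by
    intro a ha j
    refine (hf j).bdd_mul (c := 1) (hmem a ha).1.aestronglyMeasurable (Filter.Eventually.of_forall fun x => ?_)
    rw [Real.norm_eq_abs, abs_of_nonneg ((hmem a ha).2 x).1]
    exact ((hmem a ha).2 x).2
  have hInonneg : ∀ a ∈ {a : X → ℝ | Measurable a ∧ (∀ x, a x ∈ Set.Icc (0:ℝ) 1) ∧ ∫ x, a x ∂μ = L * (μ Set.univ).toReal}, ∀ j, 0 ≤ ∫ x, a x * f j x ∂μ := fun a ha j =>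
    integral_nonneg fun x => mul_nonneg ((hmem a ha).2 x).1 (hfpos j x)
  have hIle : ∀ a ∈ {a : X → ℝ | Measurable a ∧ (∀ x, a x ∈ Set.Icc (0:ℝ) 1) ∧ ∫ x, a x ∂μ = L * (μ Set.univ).toReal}, ∀ j, ∫ x, a x * f j x ∂μ ≤ ∫ x, f j x ∂μ := fun a ha j =>
    integral_mono (hInt a ha j) (hf j) fun x =>
      mul_le_of_le_one_left (hfpos j x) ((hmem a ha).2 x).2
  -- expansion of the inner integral
  have hsum : ∀ a ∈ {a : X → ℝ | Measurable a ∧ (∀ x, a x ∈ Set.Icc (0:ℝ) 1) ∧ ∫ x, a x ∂μ = L * (μ Set.univ).toReal}, ∀ α : Fin N → ℝ,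
      ∫ x, a x * (∑ j, α j * f j x) ∂μ = ∑ j, α j * ∫ x, a x * f j x ∂μ := by
    intro a ha α
    have h1 : ∀ x, a x * (∑ j, α j * f j x) = ∑ j, α j * (a x * f j x) := by
      intro x
      rw [Finset.mul_sum]
      exact Finset.sum_congr rfl fun j _ => by ring
    simp_rw [h1]
    rw [integral_finset_sum _ (fun j _ => (hInt a ha j).const_mul (α j))]
    exact Finset.sum_congr rfl fun j _ => integral_const_mul _ _
  -- bddBelow of finite infima over j is automatic
  have hbbj : ∀ a : {a : X → ℝ | Measurable a ∧ (∀ x, a x ∈ Set.Icc (0:ℝ) 1) ∧ ∫ x, a x ∂μ = L * (μ Set.univ).toReal}, BddBelow (Set.range fun j : Fin N => ∫ x, (a : X → ℝ) x * f j x ∂μ) :=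
    fun a => (Set.finite_range _).bddBelow
  set c : ℝ := ⨆ a : {a : X → ℝ | Measurable a ∧ (∀ x, a x ∈ Set.Icc (0:ℝ) 1) ∧ ∫ x, a x ∂μ = L * (μ Set.univ).toReal}, ⨅ j : Fin N, ∫ x, (a : X → ℝ) x * f j x ∂μ with hc
  -- bddAbove of range for c's sup
  have hbac : BddAbove (Set.range fun a : {a : X → ℝ | Measurable a ∧ (∀ x, a x ∈ Set.Icc (0:ℝ) 1) ∧ ∫ x, a x ∂μ = L * (μ Set.univ).toReal} => ⨅ j : Fin N, ∫ x, (a : X → ℝ) x * f j x ∂μ) := by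
    refine ⟨∫ x, f ⟨0, hN⟩ x ∂μ, ?_⟩
    rintro _ ⟨a, rfl⟩
    exact le_trans (ciInf_le (hbbj a) ⟨0, hN⟩) (hIle a a.2 ⟨0, hN⟩)
  -- bddAbove for the inner sup for α with coordinates in [0,1]
  have hbaG : ∀ α : Fin N → ℝ, (∀ j, α j ∈ Set.Icc (0:ℝ) 1) →
      BddAbove (Set.range fun a : {a : X → ℝ | Measurable a ∧ (∀ x, a x ∈ Set.Icc (0:ℝ) 1) ∧ ∫ x, a x ∂μ = L * (μ Set.univ).toReal} =>
        ∫ x, (a : X → ℝ) x * (∑ j, α j * f j x) ∂μ) := by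
    intro α hα
    refine ⟨∑ j, ∫ x, f j x ∂μ, ?_⟩
    rintro _ ⟨a, rfl⟩
    dsimp only
    rw [hsum a a.2 α]
    refine Finset.sum_le_sum fun j _ => ?_
    calc α j * ∫ x, (a : X → ℝ) x * f j x ∂μ ≤ 1 * ∫ x, (a : X → ℝ) x * f j x ∂μ := by
          exact mul_le_mul_of_nonneg_right (hα j).2 (hInonneg a a.2 j)
      _ = ∫ x, (a : X → ℝ) x * f j x ∂μ := one_mul _
      _ ≤ ∫ x, f j x ∂μ := hIle a a.2 j
  -- SN is nonempty
  have hSNmem : (fun _ : Fin N => (N:ℝ)⁻¹) ∈ {α : Fin N → ℝ | (∀ j, α j ∈ Set.Icc (0:ℝ) 1) ∧ ∑ j, α j = 1} := by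
    have hN' : (0:ℝ) < N := by exact_mod_cast hN
    constructor
    · intro j
      exact ⟨by positivity, by rw [inv_le_one_iff₀]; right; exact_mod_cast hN⟩
    · simp [Finset.sum_const, mul_inv_cancel₀ (ne_of_gt hN')]
  haveI : Nonempty {α : Fin N → ℝ | (∀ j, α j ∈ Set.Icc (0:ℝ) 1) ∧ ∑ j, α j = 1} := ⟨⟨_, hSNmem⟩⟩
  -- nonnegativity of the inner sup values (used for bddBelow of the outer inf)
  have hGnonneg : ∀ α : {α : Fin N → ℝ | (∀ j, α j ∈ Set.Icc (0:ℝ) 1) ∧ ∑ j, α j = 1}, 0 ≤ ⨆ a : {a : X → ℝ | Measurable a ∧ (∀ x, a x ∈ Set.Icc (0:ℝ) 1) ∧ ∫ x, a x ∂μ = L * (μ Set.univ).toReal},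
      ∫ x, (a : X → ℝ) x * (∑ j, (α : Fin N → ℝ) j * f j x) ∂μ := by
    intro α
    have hα := α.2
    refine Real.iSup_nonneg fun a => integral_nonneg fun x => ?_
    exact mul_nonneg ((hmem a a.2).2 x).1
      (Finset.sum_nonneg fun j _ => mul_nonneg (hα.1 j).1 (hfpos j x))
  apply le_antisymm
  · -- easy direction: sup inf ≤ inf sup
    refine le_ciInf fun α => ?_
    have hα := α.2
    refine ciSup_le fun a => ?_
    have h1 : (⨅ j : Fin N, ∫ x, (a : X → ℝ) x * f j x ∂μ)
        ≤ ∫ x, (a : X → ℝ) x * (∑ j, (α : Fin N → ℝ) j * f j x) ∂μ := by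
      rw [hsum a a.2]
      calc (⨅ j : Fin N, ∫ x, (a : X → ℝ) x * f j x ∂μ)
          = ∑ j, (α : Fin N → ℝ) j * ⨅ j' : Fin N, ∫ x, (a : X → ℝ) x * f j' x ∂μ := by
            rw [← Finset.sum_mul, hα.2, one_mul]
        _ ≤ ∑ j, (α : Fin N → ℝ) j * ∫ x, (a : X → ℝ) x * f j x ∂μ :=
            Finset.sum_le_sum fun j _ =>
              mul_le_mul_of_nonneg_left (ciInf_le (hbbj a) j) (hα.1 j).1
    exact h1.trans (le_ciSup (hbaG _ hα.1) a)
  · -- hard direction: inf sup ≤ sup inf = c, via separation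
    refine le_of_forall_pos_le_add fun ε hε => ?_
    -- the image set K and the open box O
    set K : Set (Fin N → ℝ) := (fun a : X → ℝ => fun j => ∫ x, a x * f j x ∂μ) '' {a : X → ℝ | Measurable a ∧ (∀ x, a x ∈ Set.Icc (0:ℝ) 1) ∧ ∫ x, a x ∂μ = L * (μ Set.univ).toReal} with hK
    set O : Set (Fin N → ℝ) := Set.univ.pi fun _ => Set.Ioi (c + ε) with hO
    have hOopen : IsOpen O := isOpen_set_pi Set.finite_univ fun _ _ => isOpen_Ioi
    have hOconv : Convex ℝ O := convex_pi fun _ _ => convex_Ioi _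
    have hKconv : Convex ℝ K := by
      rintro y₁ ⟨a₁, ha₁, rfl⟩ y₂ ⟨a₂, ha₂, rfl⟩ s t hs ht hst
      have hULa : ∀ a ∈ {a : X → ℝ | Measurable a ∧ (∀ x, a x ∈ Set.Icc (0:ℝ) 1) ∧ ∫ x, a x ∂μ = L * (μ Set.univ).toReal}, Integrable a μ := by
        intro a ha
        refine (integrable_const (1:ℝ)).mono' (hmem a ha).1.aestronglyMeasurable ?_
        filter_upwards with x
        rw [Real.norm_eq_abs, abs_of_nonneg ((hmem a ha).2 x).1]
        exact ((hmem a ha).2 x).2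
      refine ⟨fun x => s * a₁ x + t * a₂ x, ?_, ?_⟩
      · refine ⟨(ha₁.1.const_mul s).add (ha₂.1.const_mul t), fun x => ?_, ?_⟩
        · constructor
          · exact add_nonneg (mul_nonneg hs (ha₁.2.1 x).1) (mul_nonneg ht (ha₂.2.1 x).1)
          · calc s * a₁ x + t * a₂ x ≤ s * 1 + t * 1 :=
                add_le_add (mul_le_mul_of_nonneg_left (ha₁.2.1 x).2 hs)
                  (mul_le_mul_of_nonneg_left (ha₂.2.1 x).2 ht)
              _ = 1 := by rw [mul_one, mul_one, hst]
        · rw [integral_add ((hULa a₁ ha₁).const_mul s) ((hULa a₂ ha₂).const_mul t),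
            integral_const_mul _ _, integral_const_mul _ _, ha₁.2.2, ha₂.2.2]
          linear_combination (L * (μ Set.univ).toReal) * hst
      · funext j
        have : ∀ x, (s * a₁ x + t * a₂ x) * f j x
            = s * (a₁ x * f j x) + t * (a₂ x * f j x) := fun x => by ring
        simp only [Pi.add_apply, Pi.smul_apply, smul_eq_mul]
        simp_rw [this]
        rw [integral_add ((hInt a₁ ha₁ j).const_mul s) ((hInt a₂ ha₂ j).const_mul t),
          integral_const_mul _ _, integral_const_mul _ _]
    have hdisj : Disjoint O K := by
      rw [Set.disjoint_left]
      rintro y hyO ⟨a, ha, rfl⟩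
      have h1 : (⨅ j : Fin N, ∫ x, a x * f j x ∂μ) ≤ c := by
        have := le_ciSup hbac (⟨a, ha⟩ : {a : X → ℝ | Measurable a ∧ (∀ x, a x ∈ Set.Icc (0:ℝ) 1) ∧ ∫ x, a x ∂μ = L * (μ Set.univ).toReal})
        exact this
      have h2 : c + ε ≤ ⨅ j : Fin N, ∫ x, a x * f j x ∂μ :=
        le_ciInf fun j => le_of_lt (hyO j trivial)
      linarith
    obtain ⟨φ, u, hφO, hφK⟩ := geometric_hahn_banach_open hOconv hOopen hKconv hdisj
    set β : Fin N → ℝ := fun j => -φ (fun j' => if j = j' then 1 else 0) with hβ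
    have hφeval : ∀ y : Fin N → ℝ, φ y = -∑ j, β j * y j := by
      intro y
      have hrep : y = ∑ j, y j • fun j' => if j = j' then (1:ℝ) else 0 := by
        funext j'
        simp [Finset.sum_apply, Finset.sum_ite_eq, if_pos (Finset.mem_univ j')]
      calc φ y = φ (∑ j, y j • fun j' => if j = j' then (1:ℝ) else 0) := by rw [← hrep]
        _ = ∑ j, y j * φ (fun j' => if j = j' then (1:ℝ) else 0) := by
            rw [map_sum]; exact Finset.sum_congr rfl fun j _ => by rw [_root_.map_smul, smul_eq_mul]
        _ = -∑ j, β j * y j := by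
            rw [← Finset.sum_neg_distrib]
            exact Finset.sum_congr rfl fun j _ => by rw [hβ]; ring
    -- translate the separation into sums
    have hKs : ∀ y ∈ K, ∑ j, β j * y j ≤ -u := by
      intro y hy
      have := hφK y hy
      rw [hφeval y] at this
      linarith
    have hOs : ∀ y ∈ O, -u < ∑ j, β j * y j := by
      intro y hy
      have := hφO y hy
      rw [hφeval y] at this
      linarith
    -- β is componentwise nonneg
    have hβnn : ∀ j, 0 ≤ β j := by
      intro j
      by_contra hneg
      push_neg at hneg
      set S : ℝ := ∑ k ∈ Finset.univ.erase j, β k * (c + ε + 1) with hS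
      set D : ℝ := -u - S - β j * (c + ε) with hD
      set t : ℝ := max 1 (D / β j) with ht
      have ht1 : (1:ℝ) ≤ t := le_max_left _ _
      set y : Fin N → ℝ := fun k => if k = j then c + ε + t else c + ε + 1 with hy
      have hyO : y ∈ O := by
        intro k _
        by_cases hk : k = j <;> simp [hy, hk, Set.mem_Ioi] <;> linarith
      have hcomp : ∑ k, β k * y k = β j * (c + ε + t) + S := by
        rw [← Finset.add_sum_erase _ _ (Finset.mem_univ j)]
        congr 1
        · simp [hy]
        · exact Finset.sum_congr rfl fun k hk => by
            simp [hy, Finset.ne_of_mem_erase hk]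
      have h1 := hOs y hyO
      rw [hcomp] at h1
      -- h1 : -u < β j * (c + ε + t) + S, i.e. D < β j * t
      have h2 : D < β j * t := by rw [hD]; linarith [h1]
      have h3 : β j * t ≤ D := by
        have h4 : D / β j ≤ t := le_max_right _ _
        have := mul_le_mul_of_nonpos_left h4 hneg.le
        rwa [mul_div_cancel₀ _ (ne_of_lt hneg)] at this
      linarith
    -- the total mass T = ∑ β j is positive
    set T : ℝ := ∑ j, β j with hT
    have hTnn : 0 ≤ T := Finset.sum_nonneg fun j _ => hβnn j
    have hy0K : (fun j => ∫ x, (fun _ : X => L) x * f j x ∂μ) ∈ K := ⟨_, ha0, rfl⟩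
    have hTpos : 0 < T := by
      rcases hTnn.lt_or_eq with h | h
      · exact h
      · exfalso
        have hβ0 : ∀ j, β j = 0 := by
          intro j
          have := Finset.sum_eq_zero_iff_of_nonneg (fun k _ => hβnn k) |>.mp h.symm
          exact this j (Finset.mem_univ j)
        have h1 := hKs _ hy0K
        have h2 := hOs (fun _ => c + ε + 1) (fun k _ => by simp [Set.mem_Ioi])
        simp [hβ0] at h1 h2
        linarith
    -- -u ≤ T * (c + ε)
    have hu : -u ≤ T * (c + ε) := by
      by_contra hcon
      push_neg at hcon
      set δ : ℝ := (-u - T * (c + ε)) / (2 * T) with hδ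
      have hδpos : 0 < δ := by
        apply div_pos <;> linarith
      have h2 := hOs (fun _ => c + ε + δ) (fun k _ => by simp [Set.mem_Ioi]; linarith)
      have h3 : ∑ j, β j * (c + ε + δ) = T * (c + ε + δ) := by
        rw [hT, Finset.sum_mul]
      rw [h3] at h2
      have h4 : T * (c + ε + δ) = T * (c + ε) + T * δ := by ring
      have h5 : T * δ = (-u - T * (c + ε)) / 2 := by
        rw [hδ]; field_simp
      rw [h4, h5] at h2
      linarith
    -- construct α ∈ SN
    set α : Fin N → ℝ := fun j => β j / T with hα
    have hαSN : α ∈ {α : Fin N → ℝ | (∀ j, α j ∈ Set.Icc (0:ℝ) 1) ∧ ∑ j, α j = 1} := by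
      constructor
      · intro j
        constructor
        · exact div_nonneg (hβnn j) hTnn
        · rw [div_le_one hTpos]
          exact Finset.single_le_sum (fun k _ => hβnn k) (Finset.mem_univ j)
      · rw [hα, ← Finset.sum_div, ← hT, div_self (ne_of_gt hTpos)]
    -- the inner sup at α is ≤ c + ε
    have hGα : (⨆ a : {a : X → ℝ | Measurable a ∧ (∀ x, a x ∈ Set.Icc (0:ℝ) 1) ∧ ∫ x, a x ∂μ = L * (μ Set.univ).toReal}, ∫ x, (a : X → ℝ) x * (∑ j, α j * f j x) ∂μ) ≤ c + ε := by
      refine ciSup_le fun a => ?_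
      rw [hsum a a.2 α]
      have hKy : (fun j => ∫ x, (a : X → ℝ) x * f j x ∂μ) ∈ K := ⟨_, a.2, rfl⟩
      have h1 := hKs _ hKy
      have h2 : ∑ j, α j * ∫ x, (a : X → ℝ) x * f j x ∂μ
          = (∑ j, β j * ∫ x, (a : X → ℝ) x * f j x ∂μ) / T := by
        rw [Finset.sum_div]
        exact Finset.sum_congr rfl fun j _ => by rw [hα]; ring
      rw [h2]
      rw [div_le_iff₀ hTpos]
      calc (∑ j, β j * ∫ x, (a : X → ℝ) x * f j x ∂μ) ≤ -u := h1
        _ ≤ T * (c + ε) := hu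
        _ = (c + ε) * T := mul_comm _ _
    -- conclude
    have hbb : BddBelow (Set.range fun α : {α : Fin N → ℝ | (∀ j, α j ∈ Set.Icc (0:ℝ) 1) ∧ ∑ j, α j = 1} => ⨆ a : {a : X → ℝ | Measurable a ∧ (∀ x, a x ∈ Set.Icc (0:ℝ) 1) ∧ ∫ x, a x ∂μ = L * (μ Set.univ).toReal},
        ∫ x, (a : X → ℝ) x * (∑ j, (α : Fin N → ℝ) j * f j x) ∂μ) := by
      refine ⟨0, ?_⟩
      rintro _ ⟨α', rfl⟩
      exact hGnonneg α'
    exact le_trans (ciInf_le hbb (⟨α, hαSN⟩ : {α : Fin N → ℝ | (∀ j, α j ∈ Set.Icc (0:ℝ) 1) ∧ ∑ j, α j = 1})) hGα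
end
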